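/- arXiv:1506.03676 — 3 statements merged into one kernel-verified Lean document; each statement's English description precedes it below -/
import Mathlib

section
/- Let Γ : U → V^d be k-majority-unique (every nonempty S with |S| ≤ k contains x having more than d/2 unique position-sensitive neighbors). Let T ⊆ U × U be nonempty with |T| ≤ k. For a ∈ U let T_{1,a} = {(x₁,x₂) ∈ T : x₁ = a} and π₁(T) = {x₁ : (x₁,x₂) ∈ T}. Then there exists a ∈ π₁(T) such that for every (x₁,x₂) ∈ T_{1,a}, the pair (x₁,x₂) has more than d/2 unique neighbors with respect to T \ T_{1,a} under the map Υ(x₁,x₂)_i = (Γ(x₁)_i, Γ(x₂)_i). -/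
open Finset

/-!
Apply majority-uniqueness to `π₁(T)` and take the resulting `a`. For `p ∈ T` with `p.1 = a`, a
unique neighbor `(i, v)` of `a` lifts to the neighbor `(i, (v, Γ p.2 i))` of `p`, and no pair `q`
with `q.1 ≠ a` reaches it, since otherwise `(i, v)` would be a neighbor of `q.1 ∈ π₁(T) \ {a}`.
-/

/-- Position-sensitive neighborhood: `nbr Γ S = {(i, Γ x i) : x ∈ S, i}`. -/
def nbr {U V ι : Type*} [DecidableEq V] [DecidableEq ι] [Fintype ι]
    (Γ : U → ι → V) (S : Finset U) : Finset (ι × V) :=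
  (S ×ˢ (Finset.univ : Finset ι)).image (fun p => (p.2, Γ p.1 p.2))

section Neighborhood

variable {α β ι V W : Type*} [DecidableEq ι] [Fintype ι] [DecidableEq V] [DecidableEq W]

theorem mem_nbr {Γ : α → ι → V} {S : Finset α} {i : ι} {v : V} :
    (i, v) ∈ nbr Γ S ↔ ∃ x ∈ S, Γ x i = v := by
  simp [nbr, and_comm]

theorem nbr_mono (Γ : α → ι → V) {S S' : Finset α} (h : S ⊆ S') : nbr Γ S ⊆ nbr Γ S' :=
  image_subset_image (product_subset_product_left h)

theorem card_uniqueNbr_le_card_uniqueNbr_pair [DecidableEq α] (Γ₁ : α → ι → V) (Γ₂ : β → ι → W)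
    (p : α × β) (S : Finset (α × β)) :
    #(nbr Γ₁ {p.1} \ nbr Γ₁ (S.image Prod.fst)) ≤
      #(nbr (fun q i => (Γ₁ q.1 i, Γ₂ q.2 i)) {p} \
        nbr (fun q i => (Γ₁ q.1 i, Γ₂ q.2 i)) S) := by
  have lift_injective : Function.Injective fun x : ι × V => (x.1, (x.2, Γ₂ p.2 x.1)) := by
    rintro ⟨i, v⟩ ⟨j, w⟩ h
    simp_all
  refine card_le_card_of_injOn _ ?_ lift_injective.injOn
  rintro ⟨i, v⟩ hiv
  simp only [coe_sdiff, Set.mem_sdiff, mem_coe, mem_nbr, mem_singleton, exists_eq_left,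
    Prod.mk.injEq] at hiv ⊢
  obtain ⟨rfl, hunique⟩ := hiv
  refine ⟨by simp, ?_⟩
  rintro ⟨q, hqS, hq, -⟩
  exact hunique ⟨q.1, mem_image_of_mem _ hqS, hq⟩

end Neighborhood

theorem stmt8_general {U V : Type*} [DecidableEq U] [DecidableEq V] {d k : ℕ}
    (Γ : U → Fin d → V)
    (hmaj : ∀ S : Finset U, S.Nonempty → S.card ≤ k →
      ∃ x ∈ S, (d : ℝ) / 2 < (((nbr Γ {x}) \ (nbr Γ (S.erase x))).card : ℝ))
    (T : Finset (U × U)) (hTne : T.Nonempty) (hTk : T.card ≤ k) :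
    ∃ a ∈ T.image Prod.fst,
      ∀ p ∈ T.filter (fun q => q.1 = a),
        (d : ℝ) / 2 <
          (((nbr (fun (q : U × U) (i : Fin d) => (Γ q.1 i, Γ q.2 i)) {p}) \
            (nbr (fun (q : U × U) (i : Fin d) => (Γ q.1 i, Γ q.2 i))
              (T \ T.filter (fun q => q.1 = a)))).card : ℝ) := by
  obtain ⟨a, ha, hunique⟩ := hmaj (T.image Prod.fst) (hTne.image _) (card_image_le.trans hTk)
  refine ⟨a, ha, fun p hp => hunique.trans_le ?_⟩
  obtain ⟨-, rfl⟩ := mem_filter.mp hp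
  have hrest :
      (T \ T.filter (fun q => q.1 = p.1)).image Prod.fst ⊆ (T.image Prod.fst).erase p.1 := by
    intro x hx
    obtain ⟨q, hq, rfl⟩ := mem_image.mp hx
    rw [← filter_not, mem_filter] at hq
    exact mem_erase.mpr ⟨hq.2, mem_image_of_mem _ hq.1⟩
  exact_mod_cast (card_le_card (sdiff_subset_sdiff subset_rfl (nbr_mono Γ hrest))).trans
    (card_uniqueNbr_le_card_uniqueNbr_pair Γ Γ p _)

/-- First-component selection step in Lemma 3: there is `a ∈ π₁(T)` such that all
pairs with first component `a` have more than `d/2` unique neighbors w.r.t.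
`T \ T_{1,a}` under `Υ(x₁,x₂)ᵢ = (Γ(x₁)ᵢ, Γ(x₂)ᵢ)`. -/
theorem stmt8 {U V : Type*} [DecidableEq U] [DecidableEq V] {d k : ℕ} (hd : 0 < d)
    (Γ : U → Fin d → V)
    (hmaj : ∀ S : Finset U, S.Nonempty → S.card ≤ k →
      ∃ x ∈ S, (d : ℝ) / 2 < (((nbr Γ {x}) \ (nbr Γ (S.erase x))).card : ℝ))
    (T : Finset (U × U)) (hTne : T.Nonempty) (hTk : T.card ≤ k) :
    ∃ a ∈ T.image Prod.fst,
      ∀ p ∈ T.filter (fun q => q.1 = a),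
        (d : ℝ) / 2 <
          (((nbr (fun (q : U × U) (i : Fin d) => (Γ q.1 i, Γ q.2 i)) {p}) \
            (nbr (fun (q : U × U) (i : Fin d) => (Γ q.1 i, Γ q.2 i))
              (T \ T.filter (fun q => q.1 = a)))).card : ℝ) :=
  stmt8_general Γ hmaj T hTne hTk
end

section
/- Let q, k, d be positive integers and U a finite set. For j = 1,…,q let Γ_j : U → (V_j)^d be min(2·k^{j/q}, k)-super-majority-unique. Then the function Γ : U × U → ∏_{j=1}^{q} (V_j × V_{q−j+1})^d defined coordinate-wise by Γ(x₁,x₂)_{(j−1)d + l} = (Γ_j(x₁)_l, Γ_{q−j+1}(x₂)_l) for j ∈ {1,…,q}, l ∈ {1,…,d}, is k-unique: every nonempty T ⊆ U × U with |T| ≤ k contains a pair with a unique position-sensitive neighbor among its dq coordinates. -/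
open Finset

/-- `Γ` is `K`-super-majority-unique: every nonempty subset of size at most `K`
has a majority subset `A` all of whose elements have more than `d/2` unique
position-sensitive neighbors. -/
def SuperMajorityUnique {U V : Type*} [DecidableEq U] [DecidableEq V] {d : ℕ}
    (K : ℕ) (Γ : U → Fin d → V) : Prop :=
  ∀ S : Finset U, S.Nonempty → S.card ≤ K →
    ∃ A ⊆ S, (S.card : ℝ) / 2 < (A.card : ℝ) ∧
      ∀ x ∈ A, (d : ℝ) / 2 < (((nbr Γ {x}) \ (nbr Γ (S.erase x))).card : ℝ)

lemma mem_nbr_s12 {U V ι : Type*} [DecidableEq V] [DecidableEq ι] [Fintype ι]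
    (Γ : U → ι → V) (S : Finset U) (e : ι × V) :
    e ∈ nbr Γ S ↔ ∃ y ∈ S, Γ y e.1 = e.2 := by
  constructor
  · intro h
    simp only [nbr, mem_image, mem_product, mem_univ, and_true] at h
    obtain ⟨⟨y, i⟩, hy, h⟩ := h
    exact ⟨y, hy, by rw [← h]⟩
  · rintro ⟨y, hy, h⟩
    simp only [nbr, mem_image, mem_product, mem_univ, and_true]
    exact ⟨(y, e.1), hy, by simp [Prod.ext_iff, h]⟩

lemma half_lt_filter_card {U V : Type*} [DecidableEq U] [DecidableEq V] {d : ℕ}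
    (Γ : U → Fin d → V) (x : U) (S' : Finset U)
    (h : (d : ℝ) / 2 < (((nbr Γ {x}) \ (nbr Γ S')).card : ℝ)) :
    (d : ℝ) / 2 < ((Finset.univ.filter fun l : Fin d => ∀ y ∈ S', Γ y l ≠ Γ x l).card : ℝ) := by
  refine lt_of_lt_of_le h (Nat.cast_le.mpr ?_)
  apply Finset.card_le_card_of_injOn Prod.fst
  · intro e he
    rw [Finset.mem_coe, Finset.mem_sdiff] at he
    obtain ⟨h1, h2⟩ := he
    rw [mem_nbr_s12] at h1
    obtain ⟨y, hy, hv⟩ := h1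
    rw [mem_singleton] at hy
    subst hy
    simp only [Finset.mem_coe, mem_filter, mem_univ, true_and]
    intro z hz hne
    exact h2 ((mem_nbr_s12 Γ S' e).mpr ⟨z, hz, by rw [hne, hv]⟩)
  · intro e1 h1 e2 h2 hf
    have m1 := (mem_nbr_s12 Γ {x} e1).mp (mem_sdiff.mp h1).1
    have m2 := (mem_nbr_s12 Γ {x} e2).mp (mem_sdiff.mp h2).1
    simp only [mem_singleton, exists_eq_left] at m1 m2
    have : e1.2 = e2.2 := by rw [← m1, ← m2, hf]
    exact Prod.ext hf this

lemma filters_intersect {d : ℕ} (L1 L2 : Finset (Fin d))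
    (h1 : (d:ℝ)/2 < (L1.card:ℝ)) (h2 : (d:ℝ)/2 < (L2.card:ℝ)) : (L1 ∩ L2).Nonempty := by
  rw [← Finset.card_pos]
  have hr1 : (d:ℝ) < 2 * L1.card := by linarith
  have hr2 : (d:ℝ) < 2 * L2.card := by linarith
  have hd1 : d < 2 * L1.card := by exact_mod_cast hr1
  have hd2 : d < 2 * L2.card := by exact_mod_cast hr2
  have hu : (L1 ∪ L2).card ≤ d := le_trans (Finset.card_le_univ _) (by simp)
  have := Finset.card_union_add_card_inter L1 L2
  omega

/-- Lemma 4: if each `Γⱼ` is `min(2k^{j/q}, k)`-super-majority-unique, then the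
interleaved product `Γ(x₁,x₂)_{(j,l)} = (Γⱼ(x₁)_l, Γ_{q−j+1}(x₂)_l)` is `k`-unique. -/
theorem stmt12 {U V : Type*} [DecidableEq U] [DecidableEq V] {q k d : ℕ}
    (hq : 0 < q) (hk : 0 < k) (hd : 0 < d)
    (Γf : Fin q → U → Fin d → V)
    (hsmu : ∀ j : Fin q,
      SuperMajorityUnique
        (⌊min (2 * (k : ℝ) ^ (((j : ℕ) + 1 : ℝ) / (q : ℝ))) (k : ℝ)⌋₊) (Γf j)) :
    ∀ T : Finset (U × U), T.Nonempty → T.card ≤ k →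
      ∃ p ∈ T,
        0 < ((nbr (fun (x : U × U) (jl : Fin q × Fin d) =>
                (Γf jl.1 x.1 jl.2, Γf jl.1.rev x.2 jl.2)) {p}) \
             (nbr (fun (x : U × U) (jl : Fin q × Fin d) =>
                (Γf jl.1 x.1 jl.2, Γf jl.1.rev x.2 jl.2)) (T.erase p))).card := by
  classical
  intro T hT hTk
  have hKpos : (0:ℝ) < (k:ℝ) := by exact_mod_cast hk
  have hqR : (0:ℝ) < (q:ℝ) := by exact_mod_cast hq
  set S₁ := T.image Prod.fst with hS₁
  have hS₁ne : S₁.Nonempty := hT.image _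
  have hS₁k : S₁.card ≤ k := le_trans (card_image_le) hTk
  -- choose minimal level J
  have hPex : ∃ n, n < q ∧ (S₁.card : ℝ) ≤ 2 * (k:ℝ) ^ (((n:ℝ)+1)/(q:ℝ)) := by
    refine ⟨q-1, by omega, ?_⟩
    have he : (((q-1:ℕ):ℝ)+1)/(q:ℝ) = 1 := by
      rw [Nat.cast_sub hq, Nat.cast_one]
      field_simp
      ring
    rw [he, Real.rpow_one]
    have : (S₁.card:ℝ) ≤ (k:ℝ) := by exact_mod_cast hS₁k
    linarith
  set J := Nat.find hPex with hJdef
  obtain ⟨hJq, hJle⟩ := Nat.find_spec hPex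
  set j₀ : Fin q := ⟨J, hJq⟩ with hj₀
  have hfloor : S₁.card ≤ ⌊min (2 * (k:ℝ) ^ ((((j₀:ℕ):ℝ)+1)/(q:ℝ))) (k:ℝ)⌋₊ := by
    apply Nat.le_floor
    refine le_min ?_ (by exact_mod_cast hS₁k)
    exact hJle
  obtain ⟨A, hAS, hAcard, hAuniq⟩ := hsmu j₀ S₁ hS₁ne hfloor
  have hS₁1 : (1:ℝ) ≤ (S₁.card:ℝ) := by exact_mod_cast hS₁ne.card_pos
  have hAne : A.Nonempty := by
    rw [← Finset.card_pos]
    have : (0:ℝ) < (A.card:ℝ) := by linarith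
    exact_mod_cast this
  -- pick a ∈ A with minimal fiber
  obtain ⟨a, haA, hamin⟩ := A.exists_min_image (fun a => (T.filter fun p => p.1 = a).card) hAne
  set Fb := T.filter (fun p => p.1 = a) with hFb
  have hFbne : Fb.Nonempty := by
    have ha : a ∈ S₁ := hAS haA
    rw [hS₁, mem_image] at ha
    obtain ⟨p, hp, rfl⟩ := ha
    exact ⟨p, mem_filter.mpr ⟨hp, rfl⟩⟩
  have hsum : ∑ x ∈ S₁, (T.filter fun p => p.1 = x).card = T.card :=
    (Finset.card_eq_sum_card_fiberwise (fun p hp => mem_image_of_mem Prod.fst hp)).symm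
  have hAsum : A.card * Fb.card ≤ k := by
    calc A.card * Fb.card = A.card • Fb.card := rfl
      _ ≤ ∑ x ∈ A, (T.filter fun p => p.1 = x).card := Finset.card_nsmul_le_sum A _ _ hamin
      _ ≤ ∑ x ∈ S₁, (T.filter fun p => p.1 = x).card :=
          Finset.sum_le_sum_of_subset hAS
      _ = T.card := hsum
      _ ≤ k := hTk
  -- bound on the fiber
  have hFbk : (Fb.card:ℝ) ≤ (k:ℝ) := by
    exact_mod_cast le_trans (Finset.card_filter_le T _) hTk
  set E : ℝ := (((Fin.rev j₀ : ℕ):ℝ)+1)/(q:ℝ) with hEdef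
  have hrevval : ((Fin.rev j₀ : ℕ):ℝ) = (q:ℝ) - (J:ℝ) - 1 := by
    have : (Fin.rev j₀ : ℕ) = q - (J+1) := by
      simp [Fin.rev, hj₀]
    rw [this, Nat.cast_sub (by omega : J + 1 ≤ q)]
    push_cast
    ring
  have hE : E = 1 - (J:ℝ)/(q:ℝ) := by
    rw [hEdef, hrevval]
    field_simp
    ring
  have hEpos : (0:ℝ) < (k:ℝ) ^ E := Real.rpow_pos_of_pos hKpos _
  have hkey : (Fb.card:ℝ) ≤ 2 * (k:ℝ) ^ E := by
    rcases Nat.eq_zero_or_pos J with hJ0 | hJ0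
    · have hE1 : E = 1 := by rw [hE, hJ0]; simp
      rw [hE1, Real.rpow_one]
      linarith
    · have hmin' := Nat.find_min hPex (show J - 1 < J by omega)
      push_neg at hmin'
      have hgt := hmin' (by omega)
      have hc : ((J-1:ℕ):ℝ) + 1 = (J:ℝ) := by
        rw [Nat.cast_sub hJ0]
        push_cast; ring
      rw [hc] at hgt
      -- hgt : 2 * k ^ (J/q) < S₁.card
      have hApow : (k:ℝ) ^ ((J:ℝ)/(q:ℝ)) < (A.card:ℝ) := by linarith
      have hppos : (0:ℝ) < (k:ℝ) ^ ((J:ℝ)/(q:ℝ)) := Real.rpow_pos_of_pos hKpos _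
      have hprod : (A.card:ℝ) * (Fb.card:ℝ) ≤ (k:ℝ) := by exact_mod_cast hAsum
      have hFb0 : (0:ℝ) ≤ (Fb.card:ℝ) := Nat.cast_nonneg _
      have hFpow : (Fb.card:ℝ) * (k:ℝ) ^ ((J:ℝ)/(q:ℝ)) ≤ (k:ℝ) := by nlinarith
      have hsplit : (k:ℝ) = (k:ℝ) ^ ((J:ℝ)/(q:ℝ)) * (k:ℝ) ^ E := by
        rw [← Real.rpow_add hKpos]
        have : (J:ℝ)/(q:ℝ) + E = 1 := by rw [hE]; ring
        rw [this, Real.rpow_one]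
      rw [hsplit] at hFpow
      nlinarith
  -- second application
  set S₂ := Fb.image Prod.snd with hS₂
  have hS₂ne : S₂.Nonempty := hFbne.image _
  have hfloor2 : S₂.card ≤ ⌊min (2 * (k:ℝ) ^ E) (k:ℝ)⌋₊ := by
    apply Nat.le_floor
    refine le_min ?_ ?_
    · exact le_trans (by exact_mod_cast card_image_le) hkey
    · exact le_trans (by exact_mod_cast card_image_le) hFbk
  obtain ⟨A₂, hA₂S, hA₂card, hA₂uniq⟩ := hsmu (Fin.rev j₀) S₂ hS₂ne hfloor2
  have hA₂ne : A₂.Nonempty := by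
    rw [← Finset.card_pos]
    have h1 : (1:ℝ) ≤ (S₂.card:ℝ) := by exact_mod_cast hS₂ne.card_pos
    have : (0:ℝ) < (A₂.card:ℝ) := by linarith
    exact_mod_cast this
  obtain ⟨b, hbA₂⟩ := hA₂ne
  -- common position
  have hL1 := half_lt_filter_card (Γf j₀) a (S₁.erase a) (hAuniq a haA)
  have hL2 := half_lt_filter_card (Γf (Fin.rev j₀)) b (S₂.erase b) (hA₂uniq b hbA₂)
  obtain ⟨l, hl⟩ := filters_intersect _ _ hL1 hL2
  rw [mem_inter, mem_filter, mem_filter] at hl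
  obtain ⟨⟨-, hl1⟩, ⟨-, hl2⟩⟩ := hl
  -- the witness pair
  have hbS₂ : b ∈ S₂ := hA₂S hbA₂
  rw [hS₂, mem_image] at hbS₂
  obtain ⟨p0, hp0, hp0b⟩ := hbS₂
  rw [hFb, mem_filter] at hp0
  obtain ⟨hp0T, hp0a⟩ := hp0
  refine ⟨p0, hp0T, ?_⟩
  rw [Finset.card_pos]
  refine ⟨((j₀, l), (Γf j₀ a l, Γf (Fin.rev j₀) b l)), ?_⟩
  rw [mem_sdiff]
  constructor
  · rw [mem_nbr_s12]
    exact ⟨p0, mem_singleton_self _, by simp [hp0a, hp0b]⟩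
  · rw [mem_nbr_s12]
    rintro ⟨p', hp', hval⟩
    rw [mem_erase] at hp'
    obtain ⟨hpne, hpT⟩ := hp'
    simp only [Prod.mk.injEq] at hval
    obtain ⟨hv1, hv2⟩ := hval
    by_cases hpa : p'.1 = a
    · have hp'Fb : p' ∈ Fb := mem_filter.mpr ⟨hpT, hpa⟩
      have hmem : p'.2 ∈ S₂ := mem_image_of_mem _ hp'Fb
      have hne : p'.2 ≠ b := fun h => hpne (Prod.ext (hpa.trans hp0a.symm) (h.trans hp0b.symm))
      exact hl2 p'.2 (mem_erase.mpr ⟨hne, hmem⟩) hv2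
    · have hmem : p'.1 ∈ S₁.erase a := mem_erase.mpr ⟨hpa, mem_image_of_mem _ hpT⟩
      exact hl1 p'.1 hmem hv1
end

section
/- Let Γ : U → V^d with position-sensitive neighborhoods. If for every subset S ⊆ U with 2 ≤ |S| ≤ k we have |Γ(S)| > (7/8)·d·|S|, then Γ is k-super-majority-unique: for every S with |S| ≤ k there exists A ⊆ S with |A| > |S|/2 such that every x ∈ A has more than d/2 unique neighbors with respect to S. -/
open Finset

lemma nbr_biUnion {U V ι : Type*} [DecidableEq U] [DecidableEq V] [DecidableEq ι] [Fintype ι]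
    (Γ : U → ι → V) (S : Finset U) :
    nbr Γ S = S.biUnion (fun x => nbr Γ {x}) := by
  ext e
  simp only [nbr, Finset.mem_biUnion, Finset.mem_image, Finset.mem_product,
    Finset.mem_singleton, Finset.mem_univ]
  constructor
  · rintro ⟨⟨x, i⟩, ⟨hx, -⟩, rfl⟩
    exact ⟨x, hx, ⟨x, i⟩, ⟨rfl, trivial⟩, rfl⟩
  · rintro ⟨x, hx, ⟨y, i⟩, ⟨rfl, -⟩, rfl⟩
    exact ⟨⟨y, i⟩, ⟨hx, trivial⟩, rfl⟩

lemma card_nbr_singleton {U V ι : Type*} [DecidableEq V] [DecidableEq ι] [Fintype ι]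
    (Γ : U → ι → V) (x : U) :
    (nbr Γ {x}).card = Fintype.card ι := by
  have : nbr Γ {x} = Finset.univ.image (fun i => (i, Γ x i)) := by
    ext e
    simp only [nbr, Finset.mem_image, Finset.mem_product, Finset.mem_singleton, Finset.mem_univ]
    constructor
    · rintro ⟨⟨y, i⟩, ⟨rfl, -⟩, rfl⟩; exact ⟨i, trivial, rfl⟩
    · rintro ⟨i, -, rfl⟩; exact ⟨⟨x, i⟩, ⟨rfl, trivial⟩, rfl⟩
  rw [this, Finset.card_image_of_injective _ (fun i j h => (Prod.mk.injEq _ _ _ _ ▸ h).1),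
    Finset.card_univ]

lemma count_key {U V : Type*} [DecidableEq U] [DecidableEq V] {d : ℕ}
    (Γ : U → Fin d → V) (S : Finset U) :
    2 * (nbr Γ S).card ≤ d * S.card + ∑ x ∈ S, ((nbr Γ {x}) \ (nbr Γ (S.erase x))).card := by
  classical
  set N := nbr Γ S with hN
  set m : Fin d × V → ℕ := fun e => (S.filter (fun x => e ∈ nbr Γ {x})).card with hm
  set w : Fin d × V → ℕ := fun e => (S.filter (fun x => e ∈ nbr Γ {x} \ nbr Γ (S.erase x))).card
    with hw
  have hmem : ∀ e ∈ N, ∃ x ∈ S, e ∈ nbr Γ {x} := by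
    intro e he
    rw [hN, nbr_biUnion] at he
    exact Finset.mem_biUnion.mp he
  have h1 : ∀ e ∈ N, 2 ≤ m e + w e := by
    intro e he
    obtain ⟨x, hx, hex⟩ := hmem e he
    have hm1 : 1 ≤ m e := Finset.card_pos.mpr ⟨x, Finset.mem_filter.mpr ⟨hx, hex⟩⟩
    rcases Nat.lt_or_ge (m e) 2 with h | h
    · have hme : m e = 1 := le_antisymm (by omega) hm1
      have hfil : S.filter (fun x => e ∈ nbr Γ {x}) = {x} :=
        Finset.eq_singleton_iff_unique_mem.mpr ⟨Finset.mem_filter.mpr ⟨hx, hex⟩,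
          fun y hy => by
            by_contra hne
            have : ({x, y} : Finset U) ⊆ S.filter (fun x => e ∈ nbr Γ {x}) := by
              intro z hz
              rcases Finset.mem_insert.mp hz with rfl | hz
              · exact Finset.mem_filter.mpr ⟨hx, hex⟩
              · rwa [Finset.mem_singleton.mp hz]
            have := Finset.card_le_card this
            rw [Finset.card_pair (fun h => hne h.symm)] at this
            have h2 : 2 ≤ m e := by rw [hm]; exact this
            omega⟩
      have : e ∈ nbr Γ {x} \ nbr Γ (S.erase x) := by
        rw [Finset.mem_sdiff]
        refine ⟨hex, fun hc => ?_⟩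
        rw [nbr_biUnion] at hc
        obtain ⟨y, hy, hey⟩ := Finset.mem_biUnion.mp hc
        have hyS := Finset.mem_of_mem_erase hy
        have : y ∈ ({x} : Finset U) := hfil ▸ Finset.mem_filter.mpr ⟨hyS, hey⟩
        exact (Finset.ne_of_mem_erase hy) (Finset.mem_singleton.mp this)
      have hw1 : 1 ≤ w e := Finset.card_pos.mpr ⟨x, Finset.mem_filter.mpr ⟨hx, this⟩⟩
      omega
    · omega
  calc 2 * N.card = ∑ e ∈ N, 2 := by rw [Finset.sum_const, smul_eq_mul, mul_comm]
    _ ≤ ∑ e ∈ N, (m e + w e) := Finset.sum_le_sum h1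
    _ = ∑ e ∈ N, m e + ∑ e ∈ N, w e := Finset.sum_add_distrib
    _ ≤ d * S.card + ∑ x ∈ S, ((nbr Γ {x}) \ (nbr Γ (S.erase x))).card := by
        gcongr
        · have : ∀ e, m e = ∑ x ∈ S, if e ∈ nbr Γ {x} then 1 else 0 := fun e =>
            Finset.card_filter _ _
          calc ∑ e ∈ N, m e = ∑ e ∈ N, ∑ x ∈ S, if e ∈ nbr Γ {x} then 1 else 0 := by
                simp_rw [this]
            _ = ∑ x ∈ S, ∑ e ∈ N, if e ∈ nbr Γ {x} then 1 else 0 := Finset.sum_comm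
            _ = ∑ x ∈ S, (N.filter (fun e => e ∈ nbr Γ {x})).card := by
                simp_rw [Finset.card_filter]
            _ = ∑ x ∈ S, d := by
                refine Finset.sum_congr rfl fun x hx => ?_
                have hsub : nbr Γ {x} ⊆ N := by
                  intro e he
                  rw [hN, nbr_biUnion]
                  exact Finset.mem_biUnion.mpr ⟨x, hx, he⟩
                have : N.filter (fun e => e ∈ nbr Γ {x}) = nbr Γ {x} := by
                  ext e
                  simp only [Finset.mem_filter]
                  exact ⟨fun h => h.2, fun h => ⟨hsub h, h⟩⟩
                rw [this, card_nbr_singleton, Fintype.card_fin]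
            _ = d * S.card := by rw [Finset.sum_const, smul_eq_mul, mul_comm]
            _ ≤ d * S.card := le_refl _
        · have : ∀ e, w e = ∑ x ∈ S, if e ∈ nbr Γ {x} \ nbr Γ (S.erase x) then 1 else 0 :=
            fun e => Finset.card_filter _ _
          calc ∑ e ∈ N, w e
              = ∑ x ∈ S, ∑ e ∈ N, if e ∈ nbr Γ {x} \ nbr Γ (S.erase x) then 1 else 0 := by
                simp_rw [this]; exact Finset.sum_comm
            _ = ∑ x ∈ S, (N.filter (fun e => e ∈ nbr Γ {x} \ nbr Γ (S.erase x))).card := by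
                simp_rw [Finset.card_filter]
            _ ≤ ∑ x ∈ S, ((nbr Γ {x}) \ (nbr Γ (S.erase x))).card := by
                refine Finset.sum_le_sum fun x hx => Finset.card_le_card fun e he => ?_
                exact (Finset.mem_filter.mp he).2

/-- Expansion `|Γ(S)| > (7/8) d |S|` on all sets of size `2..k` implies
`k`-super-majority-uniqueness. -/
theorem stmt18 {U V : Type*} [DecidableEq U] [DecidableEq V] {d k : ℕ} (hd : 0 < d)
    (Γ : U → Fin d → V)
    (hexp : ∀ S : Finset U, 2 ≤ S.card → S.card ≤ k →
      (7 / 8 : ℝ) * d * S.card < ((nbr Γ S).card : ℝ)) :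
    ∀ S : Finset U, S.Nonempty → S.card ≤ k →
      ∃ A ⊆ S, (S.card : ℝ) / 2 < (A.card : ℝ) ∧
        ∀ x ∈ A, (d : ℝ) / 2 < (((nbr Γ {x}) \ (nbr Γ (S.erase x))).card : ℝ) := by
  intro S hS hSk
  set A := S.filter (fun x => (d:ℝ)/2 < (((nbr Γ {x}) \ (nbr Γ (S.erase x))).card : ℝ)) with hA
  refine ⟨A, Finset.filter_subset _ _, ?_, fun x hx => (Finset.mem_filter.mp hx).2⟩
  by_contra hcon
  push_neg at hcon
  have h0d : (0:ℝ) ≤ (d:ℝ) := Nat.cast_nonneg d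
  rcases Nat.lt_or_ge S.card 2 with hS2 | hS2
  · have hc1 : S.card = 1 := by
      have := Finset.card_pos.mpr hS; omega
    obtain ⟨x, rfl⟩ := Finset.card_eq_one.mp hc1
    have hxA : x ∈ A := by
      refine Finset.mem_filter.mpr ⟨Finset.mem_singleton_self x, ?_⟩
      have h1 : ({x} : Finset U).erase x = ∅ := by simp
      have h2 : nbr Γ (∅ : Finset U) = ∅ := by simp [nbr]
      rw [h1, h2, Finset.sdiff_empty, card_nbr_singleton, Fintype.card_fin]
      have : (0:ℝ) < d := by exact_mod_cast hd
      linarith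
    have h1A : 1 ≤ A.card := Finset.card_pos.mpr ⟨x, hxA⟩
    rw [hc1] at hcon
    have : (1:ℝ) ≤ (A.card:ℝ) := by exact_mod_cast h1A
    simp at hcon
    linarith
  · have hexpS := hexp S hS2 hSk
    have hkey := count_key Γ S
    have hkeyR : 2 * ((nbr Γ S).card : ℝ) ≤
        (d:ℝ) * S.card + ∑ x ∈ S, ((((nbr Γ {x}) \ (nbr Γ (S.erase x))).card : ℝ)) := by
      exact_mod_cast hkey
    have hAsub : A ⊆ S := Finset.filter_subset _ _
    have hsplit : ∑ x ∈ S \ A, ((((nbr Γ {x}) \ (nbr Γ (S.erase x))).card : ℝ))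
        + ∑ x ∈ A, ((((nbr Γ {x}) \ (nbr Γ (S.erase x))).card : ℝ))
        = ∑ x ∈ S, ((((nbr Γ {x}) \ (nbr Γ (S.erase x))).card : ℝ)) :=
      Finset.sum_sdiff hAsub
    have hbA : ∑ x ∈ A, ((((nbr Γ {x}) \ (nbr Γ (S.erase x))).card : ℝ))
        ≤ (d:ℝ) * A.card := by
      rw [mul_comm]
      calc ∑ x ∈ A, ((((nbr Γ {x}) \ (nbr Γ (S.erase x))).card : ℝ))
          ≤ ∑ x ∈ A, (d:ℝ) := by
            refine Finset.sum_le_sum fun x hx => ?_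
            have : ((nbr Γ {x}) \ (nbr Γ (S.erase x))).card ≤ (nbr Γ {x}).card :=
              Finset.card_le_card (Finset.sdiff_subset)
            rw [card_nbr_singleton, Fintype.card_fin] at this
            exact_mod_cast this
        _ = (A.card : ℝ) * d := by rw [Finset.sum_const]; push_cast; ring
    have hbSA : ∑ x ∈ S \ A, ((((nbr Γ {x}) \ (nbr Γ (S.erase x))).card : ℝ))
        ≤ ((d:ℝ)/2) * (S \ A).card := by
      rw [mul_comm]
      calc ∑ x ∈ S \ A, ((((nbr Γ {x}) \ (nbr Γ (S.erase x))).card : ℝ))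
          ≤ ∑ x ∈ S \ A, (d:ℝ)/2 := by
            refine Finset.sum_le_sum fun x hx => ?_
            obtain ⟨hxS, hxA⟩ := Finset.mem_sdiff.mp hx
            rw [hA] at hxA
            simp only [Finset.mem_filter, not_and, not_lt] at hxA
            exact hxA hxS
        _ = ((S \ A).card : ℝ) * ((d:ℝ)/2) := by rw [Finset.sum_const]; push_cast; ring
    have hcardsd : ((S \ A).card : ℝ) = (S.card : ℝ) - (A.card : ℝ) := by
      rw [Finset.card_sdiff_of_subset hAsub]
      have := Finset.card_le_card hAsub
      push_cast [this]
      ring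
    nlinarith [hkeyR, hexpS, hbA, hbSA, hsplit, hcardsd, hcon, h0d]
end
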